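/- arXiv:0712.3192 — 2 statements merged into one kernel-verified Lean document; each statement's English description precedes it below -/
import Mathlib

section
/- For all integers r ≥ 1, k ≥ 1 and g ≥ 1, the Verlinde numbers satisfy the symmetry k^g · s_{r,k}(g) = r^g · s_{k,r}(g); equivalently, the quantity s_{r,k}(g)/r^g is symmetric under interchanging r and k. (This is the numerical identity underlying the equality h^0(U_X(k, k(g−1)), O(rΘ)) = h^0(SU_X(r), L^k) of dimensions of spaces of generalized theta functions.) -/
open Finset Real

/-- Zagier's formula for the Verlinde number `s_{r,k}(g)`:
`s_{r,k}(g) = (r/(r+k))^g * Σ_{S ⊆ {1,…,r+k}, |S| = r} Π_{s ∈ S, t ∉ S} |2 sin(π(s−t)/(r+k))|^{g−1}`,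
where `T = {1,…,r+k} \ S` is the complement (so `|T| = k`). -/
noncomputable def verlinde (r k g : ℕ) : ℝ :=
  ((r : ℝ) / (r + k)) ^ g *
    ∑ S ∈ (Finset.Icc 1 (r + k)).powersetCard r,
      ∏ s ∈ S, ∏ t ∈ Finset.Icc 1 (r + k) \ S,
        |2 * Real.sin (Real.pi * ((s : ℝ) - (t : ℝ)) / (r + k))| ^ (g - 1)

/-- The symmetry of the Verlinde numbers: `k^g · s_{r,k}(g) = r^g · s_{k,r}(g)`,
i.e. `s_{r,k}(g)/r^g` is symmetric in `r` and `k`. -/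
theorem verlinde_symmetry (r k g : ℕ) (hr : 1 ≤ r) (hk : 1 ≤ k) (hg : 1 ≤ g) :
    (k : ℝ) ^ g * verlinde r k g = (r : ℝ) ^ g * verlinde k r g := by
  unfold verlinde
  rw [show k + r = r + k from add_comm k r,
    show (k : ℝ) + (r : ℝ) = (r : ℝ) + (k : ℝ) from add_comm _ _]
  have habs : ∀ s t : ℕ,
      |2 * Real.sin (Real.pi * ((s : ℝ) - (t : ℝ)) / (r + k))| =
      |2 * Real.sin (Real.pi * ((t : ℝ) - (s : ℝ)) / (r + k))| := by
    intro s t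
    rw [show Real.pi * ((s : ℝ) - (t : ℝ)) / (r + k)
        = -(Real.pi * ((t : ℝ) - (s : ℝ)) / (r + k)) by ring,
      Real.sin_neg, mul_neg, abs_neg]
  have hsum :
      (∑ S ∈ (Finset.Icc 1 (r + k)).powersetCard r,
        ∏ s ∈ S, ∏ t ∈ Finset.Icc 1 (r + k) \ S,
          |2 * Real.sin (Real.pi * ((s : ℝ) - (t : ℝ)) / (r + k))| ^ (g - 1))
      = ∑ S ∈ (Finset.Icc 1 (r + k)).powersetCard k,
        ∏ s ∈ S, ∏ t ∈ Finset.Icc 1 (r + k) \ S,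
          |2 * Real.sin (Real.pi * ((s : ℝ) - (t : ℝ)) / (r + k))| ^ (g - 1) := by
    apply Finset.sum_nbij' (fun S => Finset.Icc 1 (r + k) \ S)
      (fun S => Finset.Icc 1 (r + k) \ S)
    · intro S hS
      rw [Finset.mem_powersetCard] at hS ⊢
      refine ⟨Finset.sdiff_subset, ?_⟩
      rw [Finset.card_sdiff_of_subset hS.1, Nat.card_Icc, hS.2]
      omega
    · intro S hS
      rw [Finset.mem_powersetCard] at hS ⊢
      refine ⟨Finset.sdiff_subset, ?_⟩
      rw [Finset.card_sdiff_of_subset hS.1, Nat.card_Icc, hS.2]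
      omega
    · intro S hS
      rw [Finset.mem_powersetCard] at hS
      exact Finset.sdiff_sdiff_eq_self hS.1
    · intro S hS
      rw [Finset.mem_powersetCard] at hS
      exact Finset.sdiff_sdiff_eq_self hS.1
    · intro S hS
      rw [Finset.mem_powersetCard] at hS
      rw [Finset.sdiff_sdiff_eq_self hS.1, Finset.prod_comm]
      exact Finset.prod_congr rfl fun s _ => Finset.prod_congr rfl fun t _ => by
        rw [habs]
  rw [hsum]
  rw [← mul_assoc, ← mul_assoc, ← mul_pow, ← mul_pow]
  congr 2
  ring
end

section
/- For all integers r ≥ 1 and g ≥ 1, the Verlinde number s_{r,1}(g) equals r^g. (This is the statement that the space of sections of the determinant line bundle on SU_X(r) has the same dimension as the space of classical theta functions of level r on the Jacobian of a genus g curve.) -/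
/-!
For `k = 1` the subsets `S` are the complements of singletons `{t}`, and the summand for `S` is
`(∏_{s ≠ t} |2 sin(π(s - t)/(r+1))|)^(g-1)`. By periodicity this product is
`∏_{k=1}^{r} |1 - ζ^k|` for a primitive `(r+1)`-th root of unity `ζ`, which equals `r + 1`.
Hence the sum is `(r+1)·(r+1)^(g-1)`, and the prefactor `(r/(r+1))^g` leaves `r^g`.
-/

open Finset Real

theorem Finset.sum_powersetCard_of_card_eq_add_one {α M : Type*} [DecidableEq α]
    [AddCommMonoid M] {s : Finset α} {k : ℕ} (hs : #s = k + 1) (f : Finset α → M) :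
    ∑ T ∈ s.powersetCard k, f T = ∑ a ∈ s, f (s.erase a) := by
  refine (sum_nbij s.erase (fun a ha ↦ ?_) s.erase_injOn (fun T hT ↦ ?_) fun _ _ ↦ rfl).symm
  · simp [mem_powersetCard, erase_subset, card_erase_of_mem ha, hs]
  · obtain ⟨hTs, hTk⟩ := mem_powersetCard.mp hT
    obtain ⟨a, ha⟩ := card_eq_one.mp (by rw [card_sdiff_of_subset hTs, hs, hTk]; omega)
    have has : a ∈ s := (mem_sdiff.mp (ha ▸ mem_singleton_self a)).1
    refine ⟨a, has, ?_⟩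
    rw [← sdiff_singleton_eq_erase, ← ha, sdiff_sdiff_eq_self hTs]

theorem Function.Periodic.prod_Icc_erase_comp_sub {M : Type*} [CommMonoid M] {f : ℤ → M}
    {n : ℕ} (hf : Function.Periodic f (n + 1)) {t : ℕ} (ht : t ∈ Icc 1 (n + 1)) :
    ∏ s ∈ (Icc 1 (n + 1)).erase t, f (s - t) = ∏ k ∈ range n, f (k + 1) := by
  rw [mem_Icc] at ht
  refine prod_nbij' (fun s ↦ if t < s then s - t - 1 else s + n - t)
    (fun k ↦ if k + t + 1 ≤ n + 1 then k + t + 1 else k + t - n) ?_ ?_ ?_ ?_ ?_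
  all_goals simp only [mem_erase, mem_Icc, mem_range]
  · intro s hs; split <;> omega
  · intro k hk; split <;> omega
  · intro s hs; split <;> split <;> omega
  · intro k hk; split <;> split <;> omega
  · intro s hs
    split_ifs with hts
    · congr 1; push_cast [Nat.sub_sub, show t + 1 ≤ s by omega]; ring
    · rw [← hf]; congr 1; push_cast [show t ≤ s + n by omega]; ring

theorem prod_abs_two_sin_pi_mul_div (n : ℕ) :
    ∏ k ∈ range n, |2 * sin (π * (k + 1) / (n + 1))| = n + 1 := by
  have hμ := Complex.isPrimitiveRoot_exp (n + 1) n.succ_ne_zero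
  have h := congrArg (‖·‖) hμ.prod_one_sub_pow_eq_order
  simp only [norm_prod] at h
  convert h using 2 with k
  · rw [← Complex.exp_nat_mul, norm_sub_rev,
      show ((k + 1 : ℕ) : ℂ) * (2 * π * Complex.I / (n + 1 : ℕ))
        = Complex.I * ((2 * π * (k + 1) / (n + 1) : ℝ) : ℂ) by push_cast; ring,
      Complex.norm_exp_I_mul_ofReal_sub_one, Real.norm_eq_abs]
    congr 3
    ring
  · exact_mod_cast (Complex.norm_natCast (n + 1)).symm

theorem verlinde_one_right_general (r g : ℕ) (hg : 1 ≤ g) :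
    verlinde r 1 g = (r : ℝ) ^ g := by
  obtain ⟨g, rfl⟩ := Nat.exists_eq_add_of_le' hg
  have hperiodic : Function.Periodic (fun k : ℤ ↦ |2 * sin (π * k / (r + 1))|) (r + 1) := by
    intro k
    dsimp only
    rw [show π * ((k + (r + 1) : ℤ) : ℝ) / (r + 1) = π * k / (r + 1) + π by push_cast; field_simp,
      sin_add_pi, mul_neg, abs_neg]
  have hterm : ∀ t ∈ Icc 1 (r + 1),
      ∏ s ∈ (Icc 1 (r + 1)).erase t, ∏ t' ∈ Icc 1 (r + 1) \ (Icc 1 (r + 1)).erase t,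
      |2 * sin (π * ((s : ℝ) - t') / (r + (1 : ℕ)))| ^ (g + 1 - 1) = ((r : ℝ) + 1) ^ g := by
    intro t ht
    have := hperiodic.prod_Icc_erase_comp_sub ht
    simp only [Int.cast_sub, Int.cast_natCast, Int.cast_add, Int.cast_one] at this
    rw [sdiff_erase_self ht]
    simp only [prod_singleton, Nat.add_sub_cancel, Nat.cast_one, prod_pow, this,
      prod_abs_two_sin_pi_mul_div r]
  rw [verlinde, sum_powersetCard_of_card_eq_add_one (by simp), sum_congr rfl hterm, sum_const,
    Nat.card_Icc, nsmul_eq_mul]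
  have hr₁ : (r : ℝ) + 1 ≠ 0 := by positivity
  push_cast
  rw [div_pow, pow_succ' ((r : ℝ) + 1)]
  field_simp

/-- `s_{r,1}(g) = r^g` for all `r ≥ 1`, `g ≥ 1`. -/
theorem verlinde_one_right (r g : ℕ) (hr : 1 ≤ r) (hg : 1 ≤ g) :
    verlinde r 1 g = (r : ℝ) ^ g :=
  verlinde_one_right_general r g hg
end
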